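/- arXiv:1403.5187 — 4 statements merged into one kernel-verified Lean document; each statement's English description precedes it below -/
import Mathlib

section
/- For every nonzero isotropic vector v̄ ∈ V there exist a positive rational number b and vectors w₂, w₃ ∈ V such that (v̄, w₂, w₃) is an E-basis of V whose Gram matrix with respect to J is J_b, i.e. J(v̄,v̄) = J(w₂,w₃) = J(v̄,w₂) = 0, J(w₂,w₂) = b, J(v̄,w₃) = 1, J(w₃,w₃) = 0 (together with the hermitian-symmetric relations). -/
/-!
Since `J` has an orthogonal basis with nonzero norms it is nondegenerate, so some `u` has
`J v̄ u = 1`; subtracting `(J u u / 2) • v̄` makes `u` isotropic, giving `w₃`, and the projection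
of any vector outside `span {v̄, w₃}` orthogonally to `v̄` and `w₃` gives `w₂`. Its norm `b` is
fixed by conjugation, hence rational because `E ∩ ℝ = ℚ`. It is positive because otherwise `J`
would be `≤ 0` on the plane `span {v̄, w₂}` and positive definite on the plane
`span {v₁, v₂}`, and two planes in a 3-dimensional space meet nontrivially.
-/

open Module Complex ComplexConjugate

namespace Complex

/-- `ℚ + ℚ · i r`, a field because `(i r) ^ 2 = -d` is rational. -/
def ratSpanOneIMul (r : ℝ) (d : ℚ) (hr : r ^ 2 = d) : Subfield ℂ where
  carrier := {z | ∃ x y : ℚ, z = x + y * (I * r)}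
  zero_mem' := ⟨0, 0, by simp⟩
  one_mem' := ⟨1, 0, by simp⟩
  add_mem' := by
    rintro _ _ ⟨x, y, rfl⟩ ⟨x', y', rfl⟩
    exact ⟨x + x', y + y', by push_cast; ring⟩
  neg_mem' := by
    rintro _ ⟨x, y, rfl⟩
    exact ⟨-x, -y, by push_cast; ring⟩
  mul_mem' := by
    rintro _ _ ⟨x, y, rfl⟩ ⟨x', y', rfl⟩
    have hr' : (I * r) ^ 2 = -(d : ℂ) := by
      rw [mul_pow, I_sq, ← ofReal_pow, hr]; push_cast; ring
    exact ⟨x * x' - d * y * y', x * y' + y * x', by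
      push_cast; linear_combination (y * y' : ℂ) * hr'⟩
  inv_mem' := by
    rintro _ ⟨x, y, rfl⟩
    -- `z⁻¹ = conj z / normSq z`, which also covers `z = 0`
    refine ⟨x / (x ^ 2 + d * y ^ 2), -y / (x ^ 2 + d * y ^ 2), ?_⟩
    have hnorm : normSq (x + y * (I * r)) = ((x ^ 2 + d * y ^ 2 : ℚ) : ℝ) := by
      rw [show (x : ℂ) + y * (I * r) = ((x : ℝ) : ℂ) + ((y * r : ℝ) : ℂ) * I by push_cast; ring,
        normSq_add_mul_I]
      push_cast
      rw [← hr]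
      ring
    rw [inv_def, hnorm]
    simp only [map_add, map_mul, map_ratCast, conj_I, conj_ofReal]
    push_cast
    ring

theorem exists_ratCast_eq_of_conj_eq {r : ℝ} {d : ℚ} (hr : r ^ 2 = d)
    (a : Subfield.closure {I * (r : ℂ)}) (ha : conj (a : ℂ) = a) : ∃ q : ℚ, a = q := by
  have hle : Subfield.closure {I * (r : ℂ)} ≤ ratSpanOneIMul r d hr := by
    rw [Subfield.closure_le, Set.singleton_subset_iff]
    exact ⟨0, 1, by simp⟩
  obtain ⟨x, y, hxy⟩ := hle a.2
  have him : (y : ℂ) * r = 0 := by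
    exact_mod_cast (by simpa [hxy] using conj_eq_iff_im.mp ha : (y : ℝ) * r = 0)
  refine ⟨x, Subtype.ext ?_⟩
  rw [hxy, ← mul_assoc, mul_comm (y : ℂ), mul_assoc, him]
  simp

end Complex

theorem Submodule.inf_ne_bot_of_finrank_lt_add {K V : Type*} [DivisionRing K] [AddCommGroup V]
    [Module K V] [FiniteDimensional K V] {p q : Submodule K V}
    (h : finrank K V < finrank K p + finrank K q) : p ⊓ q ≠ ⊥ := by
  intro hpq
  have := Submodule.finrank_sup_add_finrank_inf_eq p q
  rw [hpq, finrank_bot] at this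
  have := Submodule.finrank_le (p ⊔ q)
  omega

theorem finrank_span_pair {K V : Type*} [DivisionRing K] [AddCommGroup V] [Module K V] {x y : V}
    (h : LinearIndependent K ![x, y]) : finrank K (Submodule.span K {x, y}) = 2 := by
  rw [← Matrix.range_cons_cons_empty x y ![], finrank_span_eq_card h, Fintype.card_fin]

theorem LinearIndependent.pair_apply {ι R M : Type*} [Ring R] [AddCommGroup M] [Module R M]
    {f : ι → M} (hf : LinearIndependent R f) {i j : ι} (hij : i ≠ j) :
    LinearIndependent R ![f i, f j] := by
  have hinj : Function.Injective ![i, j] := by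
    intro a b
    fin_cases a <;> fin_cases b <;> simp [hij, hij.symm]
  convert hf.comp _ hinj using 1
  ext k
  fin_cases k <;> rfl

namespace LinearMap

section Field

variable {K V : Type*} [Field K] [AddCommGroup V] [Module K V] {σ : K →+* K}
  {B : V →ₛₗ[σ] V →ₗ[K] K}

theorem apply_basis_eq_of_isOrthoᵢ {ι : Type*} [Fintype ι] {e : Basis ι K V} (hO : B.IsOrthoᵢ e)
    (v : V) (j : ι) : B v (e j) = σ (e.repr v j) * B (e j) (e j) := by
  conv_lhs => rw [← e.sum_repr v]
  rw [map_sum₂, Finset.sum_eq_single j (fun i _ hij => by simp [hO hij]) (by simp)]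
  simp

theorem IsOrthoᵢ.separatingLeft_of_apply_self_ne_zero {ι : Type*} [Fintype ι] {e : Basis ι K V}
    (hO : B.IsOrthoᵢ e) (he : ∀ i, B (e i) (e i) ≠ 0) : B.SeparatingLeft := by
  intro v hv
  refine e.repr.map_eq_zero_iff.mp (Finsupp.ext fun j => ?_)
  have := hv (e j)
  rw [apply_basis_eq_of_isOrthoᵢ hO, mul_eq_zero, map_eq_zero] at this
  exact this.resolve_right (he j)

theorem SeparatingLeft.exists_apply_eq_one (hB : B.SeparatingLeft) {v : V} (hv : v ≠ 0) :
    ∃ u, B v u = 1 := by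
  obtain ⟨u, hu⟩ : ∃ u, B v u ≠ 0 := by
    by_contra! h
    exact hv (hB v h)
  exact ⟨(B v u)⁻¹ • u, by rw [map_smul, smul_eq_mul, inv_mul_cancel₀ hu]⟩

namespace IsSymm

theorem exists_isotropic_apply_eq_one [NeZero (2 : K)] (hB : B.IsSymm) {v u : V} (hv : B v v = 0)
    (hvu : B v u = 1) : ∃ w, B w w = 0 ∧ B v w = 1 := by
  have huv : B u v = 1 := by rw [← hB.eq, hvu, map_one]
  have hc : σ (B u u / 2) = B u u / 2 := by rw [map_div₀, hB.eq, map_ofNat]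
  refine ⟨u - (B u u / 2) • v, ?_, by simp [hv, hvu]⟩
  simp only [map_sub, map_smulₛₗ, LinearMap.sub_apply, LinearMap.smul_apply, smul_eq_mul,
    RingHom.id_apply, hv, hvu, huv, hc]
  field_simp
  ring

theorem exists_ne_zero_apply_eq_zero_of_hyperbolic [FiniteDimensional K V] (hB : B.IsSymm)
    (hdim : 2 < finrank K V) {v w : V} (hv : B v v = 0) (hw : B w w = 0) (hvw : B v w = 1) :
    ∃ y ≠ 0, B v y = 0 ∧ B w y = 0 := by
  have hwv : B w v = 1 := by rw [← hB.eq, hvw, map_one]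
  obtain ⟨x, hx⟩ : ∃ x, x ∉ Submodule.span K {v, w} := by
    by_contra! h
    have htop : Submodule.span K {v, w} = ⊤ := eq_top_iff.mpr fun x _ => h x
    have := finrank_range_le_card (R := K) ![v, w]
    rw [Matrix.range_cons_cons_empty, Set.finrank, htop, finrank_top, Fintype.card_fin] at this
    omega
  refine ⟨x - B w x • v - B v x • w, fun h => hx ?_, by simp [hv, hvw], by simp [hw, hwv]⟩
  exact Submodule.mem_span_pair.mpr ⟨B w x, B v x, by rwa [sub_sub, sub_eq_zero, eq_comm] at h⟩

theorem linearIndependent_of_hyperbolic (hB : B.IsSymm) {v w y : V} (hv : B v v = 0)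
    (hvw : B v w = 1) (hvy : B v y = 0) (hwy : B w y = 0) (hy : y ≠ 0) :
    LinearIndependent K ![v, y, w] := by
  have hwv : B w v = 1 := by rw [← hB.eq, hvw, map_one]
  rw [Fintype.linearIndependent_iff]
  intro g hg
  simp only [Fin.sum_univ_three, Matrix.cons_val_zero, Matrix.cons_val_one,
    Matrix.cons_val_two, Matrix.head_cons, Matrix.tail_cons] at hg
  have h2 : g 2 = 0 := by simpa [hv, hvy, hvw] using congrArg (B v) hg
  have h0 : g 0 = 0 := by simpa [hwv, hwy, h2] using congrArg (B w) hg
  have h1 : g 1 = 0 := by simpa [h0, h2, hy] using hg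
  intro i
  fin_cases i <;> assumption

theorem exists_hyperbolic_completion [NeZero (2 : K)] [FiniteDimensional K V]
    (hB : B.IsSymm) (hsep : B.SeparatingLeft) (hdim : 2 < finrank K V) {v : V} (hv0 : v ≠ 0)
    (hv : B v v = 0) : ∃ w₂ w₃, LinearIndependent K ![v, w₂, w₃] ∧
      B v w₂ = 0 ∧ B v w₃ = 1 ∧ B w₃ w₂ = 0 ∧ B w₃ w₃ = 0 := by
  obtain ⟨u, hu⟩ := hsep.exists_apply_eq_one hv0
  obtain ⟨w₃, hw₃, hvw₃⟩ := hB.exists_isotropic_apply_eq_one hv hu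
  obtain ⟨w₂, hw₂, hvw₂, hw₃w₂⟩ := hB.exists_ne_zero_apply_eq_zero_of_hyperbolic hdim hv hw₃ hvw₃
  exact ⟨w₂, w₃, hB.linearIndependent_of_hyperbolic hv hvw₃ hvw₂ hw₃w₂ hw₂, hvw₂, hvw₃, hw₃w₂, hw₃⟩

end IsSymm

end Field

section ComplexSubfield

variable {E : Subfield ℂ} {σ : E →+* E} {V : Type*} [AddCommGroup V] [Module E V]
  {B : V →ₛₗ[σ] V →ₗ[E] E}

theorem IsSymm.re_apply_smul_add_smul (hσ : ∀ a : E, (σ a : ℂ) = conj (a : ℂ))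
    (hB : B.IsSymm) {x y : V} (hxy : B x y = 0) (a c : E) :
    ((B (a • x + c • y) (a • x + c • y) : E) : ℂ).re =
      normSq (a : ℂ) * ((B x x : E) : ℂ).re + normSq (c : ℂ) * ((B y y : E) : ℂ).re := by
  have hyx : B y x = 0 := hB.eq_iff.mp hxy
  simp only [map_add, map_smulₛₗ, add_apply, smul_apply, smul_eq_mul, RingHom.id_apply, hxy, hyx,
    mul_zero, add_zero, zero_add]
  push_cast
  simp only [hσ, ← mul_assoc, mul_conj, add_re, re_ofReal_mul]

theorem IsSymm.re_apply_self_pos_of_mem_span_pair (hσ : ∀ a : E, (σ a : ℂ) = conj (a : ℂ))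
    (hB : B.IsSymm) {x y z : V} (hxy : B x y = 0) (hx : 0 < ((B x x : E) : ℂ).re)
    (hy : 0 < ((B y y : E) : ℂ).re) (hz : z ∈ Submodule.span E {x, y}) (hz0 : z ≠ 0) :
    0 < ((B z z : E) : ℂ).re := by
  obtain ⟨a, c, rfl⟩ := Submodule.mem_span_pair.mp hz
  rw [hB.re_apply_smul_add_smul hσ hxy]
  by_cases ha : a = 0
  · have hc : c ≠ 0 := by rintro rfl; simp [ha] at hz0
    have : 0 < normSq (c : ℂ) := normSq_pos.mpr (by simpa using hc)
    simp only [ha, ZeroMemClass.coe_zero, map_zero, zero_mul, zero_add]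
    positivity
  · have : 0 < normSq (a : ℂ) := normSq_pos.mpr (by simpa using ha)
    have := normSq_nonneg (c : ℂ)
    positivity

theorem IsSymm.re_apply_self_nonpos_of_mem_span_pair (hσ : ∀ a : E, (σ a : ℂ) = conj (a : ℂ))
    (hB : B.IsSymm) {x y z : V} (hxy : B x y = 0) (hx : ((B x x : E) : ℂ).re ≤ 0)
    (hy : ((B y y : E) : ℂ).re ≤ 0) (hz : z ∈ Submodule.span E {x, y}) :
    ((B z z : E) : ℂ).re ≤ 0 := by
  obtain ⟨a, c, rfl⟩ := Submodule.mem_span_pair.mp hz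
  rw [hB.re_apply_smul_add_smul hσ hxy]
  have := mul_nonpos_of_nonneg_of_nonpos (normSq_nonneg (a : ℂ)) hx
  have := mul_nonpos_of_nonneg_of_nonpos (normSq_nonneg (c : ℂ)) hy
  linarith

theorem IsSymm.re_apply_self_pos_of_finrank_lt_four (hσ : ∀ a : E, (σ a : ℂ) = conj (a : ℂ))
    (hB : B.IsSymm) [FiniteDimensional E V] (hdim : finrank E V < 4) {x y v w : V}
    (hxy_li : LinearIndependent E ![x, y]) (hxy : B x y = 0) (hx : 0 < ((B x x : E) : ℂ).re)
    (hy : 0 < ((B y y : E) : ℂ).re) (hvw_li : LinearIndependent E ![v, w]) (hvw : B v w = 0)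
    (hv : ((B v v : E) : ℂ).re ≤ 0) : 0 < ((B w w : E) : ℂ).re := by
  by_contra! hw
  obtain ⟨z, ⟨hzxy, hzvw⟩, hz0⟩ := Submodule.ne_bot_iff _ |>.mp <|
    Submodule.inf_ne_bot_of_finrank_lt_add (p := Submodule.span E {x, y})
      (q := Submodule.span E {v, w})
      (by rw [finrank_span_pair hxy_li, finrank_span_pair hvw_li]; omega)
  exact (hB.re_apply_self_nonpos_of_mem_span_pair hσ hvw hv hw hzvw).not_gt
    (hB.re_apply_self_pos_of_mem_span_pair hσ hxy hx hy hzxy hz0)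

end ComplexSubfield

end LinearMap

theorem isotropic_vector_parabolic_basis_general
    (n : ℕ)
    (E : Subfield ℂ)
    (hE : E = Subfield.closure {Complex.I * (Real.sqrt n : ℂ)})
    (σ : E →+* E)
    (hσ : ∀ a : E, (σ a : ℂ) = starRingEnd ℂ (a : ℂ))
    (V : Type*) [AddCommGroup V] [Module E V]
    (J : V → V → E)
    (haddl : ∀ u v w : V, J (u + v) w = J u w + J v w)
    (haddr : ∀ u v w : V, J u (v + w) = J u v + J u w)
    (hsmull : ∀ (a : E) (v w : V), J (a • v) w = σ a * J v w)
    (hsmulr : ∀ (a : E) (v w : V), J v (a • w) = a * J v w)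
    (hherm : ∀ v w : V, J w v = σ (J v w))
    (bV : Module.Basis (Fin 3) E V)
    (horth : ∀ i j : Fin 3, i ≠ j → J (bV i) (bV j) = 0)
    (h1 : ∃ q : ℚ, 0 < q ∧ (J (bV 0) (bV 0) : ℂ) = (q : ℂ))
    (h2 : ∃ q : ℚ, 0 < q ∧ (J (bV 1) (bV 1) : ℂ) = (q : ℂ))
    (h3 : ∃ q : ℚ, q < 0 ∧ (J (bV 2) (bV 2) : ℂ) = (q : ℂ)) :
    ∀ vbar : V, vbar ≠ 0 → J vbar vbar = 0 →
      ∃ (b : ℚ), 0 < b ∧ ∃ w₂ w₃ : V, ∃ B : Module.Basis (Fin 3) E V,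
        B 0 = vbar ∧ B 1 = w₂ ∧ B 2 = w₃ ∧
        J vbar vbar = 0 ∧ J vbar w₂ = 0 ∧ J vbar w₃ = 1 ∧
        J w₂ vbar = 0 ∧ J w₂ w₂ = (b : E) ∧ J w₂ w₃ = 0 ∧
        J w₃ vbar = 1 ∧ J w₃ w₂ = 0 ∧ J w₃ w₃ = 0 := by
  intro v hv hvv
  let B : V →ₛₗ[σ] V →ₗ[E] E := LinearMap.mk₂'ₛₗ σ (RingHom.id E) J haddl hsmull haddr hsmulr
  have hBJ : ∀ x y, B x y = J x y := fun _ _ => rfl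
  have hB : B.IsSymm := ⟨fun x y => (hherm x y).symm⟩
  have : FiniteDimensional E V := bV.finiteDimensional_of_finite
  have hdim : finrank E V = 3 := by rw [finrank_eq_card_basis bV, Fintype.card_fin]
  obtain ⟨q₁, hq₁, he₁⟩ := h1
  obtain ⟨q₂, hq₂, he₂⟩ := h2
  obtain ⟨q₃, hq₃, he₃⟩ := h3
  have hdiag : ∀ i, B (bV i) (bV i) ≠ 0 := by
    have key : ∀ {x : V} {q : ℚ}, q ≠ 0 → (J x x : ℂ) = q → J x x ≠ 0 :=
      fun hq he h => hq (by simpa [h] using he.symm)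
    intro i
    fin_cases i
    exacts [key hq₁.ne' he₁, key hq₂.ne' he₂, key hq₃.ne he₃]
  obtain ⟨w₂, w₃, hli, hvw₂, hvw₃, hw₃w₂, hw₃⟩ : ∃ w₂ w₃, LinearIndependent E ![v, w₂, w₃] ∧
      J v w₂ = 0 ∧ J v w₃ = 1 ∧ J w₃ w₂ = 0 ∧ J w₃ w₃ = 0 :=
    hB.exists_hyperbolic_completion (LinearMap.IsOrthoᵢ.separatingLeft_of_apply_self_ne_zero
      (fun i j hij => horth i j hij) hdiag) (by omega) hv hvv
  obtain ⟨b, hb⟩ : ∃ b : ℚ, J w₂ w₂ = b := by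
    have hr : Real.sqrt n ^ 2 = ((n : ℚ) : ℝ) := by rw [Real.sq_sqrt n.cast_nonneg]; norm_cast
    subst hE
    exact Complex.exists_ratCast_eq_of_conj_eq hr (J w₂ w₂) (by rw [← hσ, ← hherm])
  have hre_pos : 0 < ((B w₂ w₂ : E) : ℂ).re :=
    hB.re_apply_self_pos_of_finrank_lt_four hσ (by omega)
      (bV.linearIndependent.pair_apply (i := 0) (j := 1) (by decide)) (horth 0 1 (by decide))
      (by simp [hBJ, he₁, hq₁]) (by simp [hBJ, he₂, hq₂])
      (hli.pair_apply (i := 0) (j := 1) (by decide)) hvw₂ (by simp [hBJ, hvv])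
  refine ⟨b, by simpa [hBJ, hb] using hre_pos, w₂, w₃,
    basisOfLinearIndependentOfCardEqFinrank hli (by simp [hdim]),
    by simp, by simp, by simp, hvv, hvw₂, hvw₃, by rw [hherm, hvw₂, map_zero], hb,
    by rw [hherm, hw₃w₂, map_zero], by rw [hherm, hvw₃, map_one], hw₃w₂, hw₃⟩

/-- With `E = ℚ(i√n) ⊆ ℂ`, `V` a 3-dimensional `E`-vector space and `J` a
hermitian form of signature `(2,1)`: every nonzero isotropic vector `v̄` can be completed
to an `E`-basis `(v̄, w₂, w₃)` of `V` whose Gram matrix is `J_b` (rows `(0,0,1)`, `(0,b,0)`,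
`(1,0,0)`) for some positive rational `b`. -/
theorem isotropic_vector_parabolic_basis
    (n : ℕ) (hn : 0 < n) (hsq : Squarefree n)
    (E : Subfield ℂ)
    (hE : E = Subfield.closure {Complex.I * (Real.sqrt n : ℂ)})
    (σ : E →+* E)
    (hσ : ∀ a : E, (σ a : ℂ) = starRingEnd ℂ (a : ℂ))
    (V : Type*) [AddCommGroup V] [Module E V]
    (J : V → V → E)
    (haddl : ∀ u v w : V, J (u + v) w = J u w + J v w)
    (haddr : ∀ u v w : V, J u (v + w) = J u v + J u w)
    (hsmull : ∀ (a : E) (v w : V), J (a • v) w = σ a * J v w)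
    (hsmulr : ∀ (a : E) (v w : V), J v (a • w) = a * J v w)
    (hherm : ∀ v w : V, J w v = σ (J v w))
    (bV : Module.Basis (Fin 3) E V)
    (horth : ∀ i j : Fin 3, i ≠ j → J (bV i) (bV j) = 0)
    (h1 : ∃ q : ℚ, 0 < q ∧ (J (bV 0) (bV 0) : ℂ) = (q : ℂ))
    (h2 : ∃ q : ℚ, 0 < q ∧ (J (bV 1) (bV 1) : ℂ) = (q : ℂ))
    (h3 : ∃ q : ℚ, q < 0 ∧ (J (bV 2) (bV 2) : ℂ) = (q : ℂ)) :
    ∀ vbar : V, vbar ≠ 0 → J vbar vbar = 0 →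
      ∃ (b : ℚ), 0 < b ∧ ∃ w₂ w₃ : V, ∃ B : Module.Basis (Fin 3) E V,
        B 0 = vbar ∧ B 1 = w₂ ∧ B 2 = w₃ ∧
        J vbar vbar = 0 ∧ J vbar w₂ = 0 ∧ J vbar w₃ = 1 ∧
        J w₂ vbar = 0 ∧ J w₂ w₂ = (b : E) ∧ J w₂ w₃ = 0 ∧
        J w₃ vbar = 1 ∧ J w₃ w₂ = 0 ∧ J w₃ w₃ = 0 :=
  isotropic_vector_parabolic_basis_general n E hE σ hσ V J haddl haddr hsmull hsmulr hherm bV horth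
    h1 h2 h3
end

section
/- The set P_b is path connected (as a subspace of M₃(ℂ) with its usual topology). -/
open Matrix

/-- The hermitian matrix `J_b` with rows `(0,0,1)`, `(0,b,0)`, `(1,0,0)`. -/
noncomputable def Jb (b : ℝ) : Matrix (Fin 3) (Fin 3) ℂ :=
  !![0, 0, 1; 0, (b : ℂ), 0; 1, 0, 0]

/-- `P_b`: matrices of the shape `[[|z|², w₁, w₂], [0, z, w₃], [0, 0, 1]]` with `z ≠ 0`
which are similitudes of `J_b`; it is the group of real points of the boundary component
group `P_D` of the Picard Shimura datum. -/
noncomputable def Pb (b : ℝ) : Set (Matrix (Fin 3) (Fin 3) ℂ) :=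
  {g | (∃ z w₁ w₂ w₃ : ℂ, z ≠ 0 ∧
          g = !![((Complex.normSq z : ℝ) : ℂ), w₁, w₂; 0, z, w₃; 0, 0, 1]) ∧
       ∃ χ : ℂ, gᴴ * Jb b * g = χ • Jb b}

/-!
The similitude condition `gᴴ J_b g = χ J_b` on `g = [[|z|², w₁, w₂], [0, z, w₃], [0, 0, 1]]` reduces
to `χ = |z|²`, `w₁ = -b z w̄₃` and `Re w₂ = -b |w₃|² / 2`. Hence `P_b` is the image of the
path-connected space `ℂ ∖ {0} × ℂ × ℝ` under the continuous map `(z, w₃, Im w₂) ↦ g`.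
-/

open ComplexConjugate

noncomputable def pbParam (b : ℝ) (z w : ℂ) (t : ℝ) : Matrix (Fin 3) (Fin 3) ℂ :=
  !![((Complex.normSq z : ℝ) : ℂ), -b * z * conj w,
      ((-(b * Complex.normSq w) / 2 : ℝ) : ℂ) + t * Complex.I;
    0, z, w;
    0, 0, 1]

lemma continuous_pbParam (b : ℝ) :
    Continuous fun p : ℂ × ℂ × ℝ => pbParam b p.1 p.2.1 p.2.2 := by
  refine continuous_matrix fun i j => ?_
  fin_cases i <;> fin_cases j <;> simp [pbParam] <;> fun_prop

lemma pbParam_similitude (b : ℝ) (z w : ℂ) (t : ℝ) :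
    (pbParam b z w t)ᴴ * Jb b * pbParam b z w t = ((Complex.normSq z : ℝ) : ℂ) • Jb b := by
  ext i j
  fin_cases i <;> fin_cases j <;>
    simp [pbParam, Jb, mul_apply, Fin.sum_univ_three, Complex.normSq_eq_conj_mul_self,
      map_ofNat] <;>
    ring

lemma entries_eq_of_similitude {b : ℝ} {z w₁ w₂ w₃ χ : ℂ}
    (h : (!![((Complex.normSq z : ℝ) : ℂ), w₁, w₂; 0, z, w₃; 0, 0, 1])ᴴ * Jb b *
      !![((Complex.normSq z : ℝ) : ℂ), w₁, w₂; 0, z, w₃; 0, 0, 1] = χ • Jb b) :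
    w₁ = -b * z * conj w₃ ∧ w₂.re = -(b * Complex.normSq w₃) / 2 := by
  have h₁₂ : conj z * b * w₃ + conj w₁ = 0 := by
    simpa [Jb, mul_apply, Fin.sum_univ_three] using congrFun (congrFun h 1) 2
  have h₂₂ : w₂ + conj w₃ * b * w₃ + conj w₂ = 0 := by
    simpa [Jb, mul_apply, Fin.sum_univ_three] using congrFun (congrFun h 2) 2
  constructor
  · rw [← Complex.conj_conj w₁, eq_neg_of_add_eq_zero_right h₁₂]
    simp [mul_comm]
  · have h := congrArg Complex.re h₂₂
    simp only [Complex.add_re, Complex.mul_re, Complex.mul_im, Complex.conj_re, Complex.conj_im,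
      Complex.ofReal_re, Complex.ofReal_im, Complex.zero_re] at h
    rw [Complex.normSq_apply]
    linear_combination h / 2

lemma Pb_eq_image (b : ℝ) :
    Pb b = (fun p : ℂ × ℂ × ℝ => pbParam b p.1 p.2.1 p.2.2) '' ({0}ᶜ ×ˢ Set.univ) := by
  ext g
  constructor
  · rintro ⟨⟨z, w₁, w₂, w₃, hz, rfl⟩, χ, hχ⟩
    obtain ⟨rfl, hw₂⟩ := entries_eq_of_similitude hχ
    refine ⟨(z, w₃, w₂.im), ⟨hz, trivial⟩, ?_⟩
    have hw₂_eq : w₂ = ((-(b * Complex.normSq w₃) / 2 : ℝ) : ℂ) + w₂.im * Complex.I := by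
      rw [← hw₂, Complex.re_add_im]
    change pbParam b z w₃ w₂.im = _
    rw [pbParam, ← hw₂_eq]
  · rintro ⟨⟨z, w, t⟩, ⟨hz, -⟩, rfl⟩
    exact ⟨⟨z, _, _, w, hz, rfl⟩, _, pbParam_similitude b z w t⟩

theorem Pb_isPathConnected_general (b : ℝ) : IsPathConnected (Pb b) := by
  have hℂ : 1 < Module.rank ℝ ℂ := by simp [Complex.rank_real_complex]
  rw [Pb_eq_image]
  exact ((isPathConnected_compl_singleton_of_one_lt_rank hℂ 0).prod isPathConnected_univ).image
    (continuous_pbParam b)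

/-- `P_b` is path connected. -/
theorem Pb_isPathConnected (b : ℝ) (hb : 0 < b) : IsPathConnected (Pb b) :=
  Pb_isPathConnected_general b
end

section
/- The set of values {a − b : (a,b,c,d) ∈ S_p(r)} equals the interval of integers {j ∈ ℤ : 0 ≤ j ≤ M_p}. -/
/-- `S_p(r)`: quadruples `(a,b,c,d) ∈ ℤ⁴` with `r ≥ a ≥ b ≥ c ≥ −r`,
`3r + a₋ + b₋ + c₋ ≥ −d ≥ a₊ + b₊ + c₊` and `a + b + c + 2d = −p`. -/
def Sset (r p : ℤ) : Set (ℤ × ℤ × ℤ × ℤ) :=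
  {q | q.1 ≤ r ∧ q.2.1 ≤ q.1 ∧ q.2.2.1 ≤ q.2.1 ∧ -r ≤ q.2.2.1 ∧
       max q.1 0 + max q.2.1 0 + max q.2.2.1 0 ≤ -q.2.2.2 ∧
       -q.2.2.2 ≤ 3 * r + min q.1 0 + min q.2.1 0 + min q.2.2.1 0 ∧
       q.1 + q.2.1 + q.2.2.1 + 2 * q.2.2.2 = -p}

/-!
Since `2 max x 0 = x + |x|` and `2 min x 0 = x - |x|`, once `d` is eliminated through
`a + b + c + 2d = -p` the two inequalities on `-d` say exactly that
`|a| + |b| + |c| ≤ N := min p (6r - p)`, while `d` exists iff `a + b + c ≡ p ≡ N (mod 2)`.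
For `r ≥ a ≥ b ≥ c` this gives `a - b ≤ |a| + |b| ≤ N` and `2(a - b) ≤ r + N` (when `b < 0`,
`|c| ≥ |b|` gives `a + 2|b| ≤ N`). Conversely `j ≤ min N ((r + N) / 2)` is attained by
`(j, 0, 0 or -1)` when `j ≤ r` and by `(r, r - j, r - j or r - j - 1)` when `j > r`, the last
entry fixing the parity. Finally, the case distinction defining `M_p` is `min N ((r + N) / 2)`.
-/

theorem mem_Sset_iff {r p a b c d : ℤ} :
    (a, b, c, d) ∈ Sset r p ↔
      (a ≤ r ∧ b ≤ a ∧ c ≤ b ∧ -r ≤ c) ∧ |a| + |b| + |c| ≤ min p (6 * r - p) ∧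
        a + b + c + 2 * d = -p := by
  simp only [Sset, Set.mem_ofPred_eq, abs_eq_max_neg]
  omega

theorem sub_le_min_of_abs_add_le {r n a b c : ℤ} (har : a ≤ r) (hcb : c ≤ b)
    (hn : |a| + |b| + |c| ≤ n) : a - b ≤ min n ((r + n) / 2) := by
  simp only [abs_eq_max_neg] at hn
  omega

theorem exists_sub_eq_of_le_min {r n j : ℤ} (hn : n ≤ 3 * r) (hj0 : 0 ≤ j)
    (hj : j ≤ min n ((r + n) / 2)) :
    ∃ a b c : ℤ, (a ≤ r ∧ b ≤ a ∧ c ≤ b ∧ -r ≤ c) ∧ |a| + |b| + |c| ≤ n ∧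
      2 ∣ a + b + c + n ∧ a - b = j := by
  rcases le_or_gt j r with hjr | hrj
  · refine ⟨j, 0, -((j + n) % 2), ?_⟩
    simp only [abs_eq_max_neg]
    omega
  · refine ⟨r, r - j, r - j - (r + n) % 2, ?_⟩
    simp only [abs_eq_max_neg]
    omega

theorem ite_bound_eq_min {r p : ℤ} (hp : p ≤ 6 * r) :
    (if p ≤ r then p
      else if p ≤ 3 * r then r + (p - r) / 2
      else if p ≤ 5 * r then r + (5 * r - p) / 2
      else 6 * r - p) = min (min p (6 * r - p)) ((r + min p (6 * r - p)) / 2) := by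
  split_ifs <;> omega

theorem Sset_values_a_sub_b_general (r p : ℤ) (hp : p ≤ 6 * r) :
    {j : ℤ | ∃ q ∈ Sset r p, q.1 - q.2.1 = j} =
      {j : ℤ | 0 ≤ j ∧ j ≤ (if p ≤ r then p
        else if p ≤ 3 * r then r + (p - r) / 2
        else if p ≤ 5 * r then r + (5 * r - p) / 2
        else 6 * r - p)} := by
  rw [ite_bound_eq_min hp]
  ext j
  constructor
  · rintro ⟨⟨a, b, c, d⟩, hq, rfl⟩
    obtain ⟨⟨har, hba, hcb, -⟩, habs, -⟩ := mem_Sset_iff.1 hq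
    exact ⟨sub_nonneg.2 hba, sub_le_min_of_abs_add_le har hcb habs⟩
  · rintro ⟨hj0, hj⟩
    obtain ⟨a, b, c, hord, habs, hpar, rfl⟩ := exists_sub_eq_of_le_min (by omega) hj0 hj
    exact ⟨(a, b, c, -((a + b + c + p) / 2)), mem_Sset_iff.2 ⟨hord, habs, by omega⟩, rfl⟩

/-- the set of values of `a − b` on `S_p(r)` is exactly `{0, 1, …, M_p}`,
where `M_p = p` if `p ≤ r`, `M_p = r + ⌊(p−r)/2⌋` if `r < p ≤ 3r`,
`M_p = r + ⌊(5r−p)/2⌋` if `3r < p ≤ 5r`, and `M_p = 6r − p` if `p > 5r`. -/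
theorem Sset_values_a_sub_b (r p : ℤ) (hr : 1 ≤ r) (hp0 : 0 ≤ p) (hp : p ≤ 6 * r) :
    {j : ℤ | ∃ q ∈ Sset r p, q.1 - q.2.1 = j} =
      {j : ℤ | 0 ≤ j ∧ j ≤ (if p ≤ r then p
        else if p ≤ 3 * r then r + (p - r) / 2
        else if p ≤ 5 * r then r + (5 * r - p) / 2
        else 6 * r - p)} :=
  Sset_values_a_sub_b_general r p hp
end

section
/- The set of values {b − c : (a,b,c,d) ∈ S_p(r)} equals the interval of integers {j ∈ ℤ : 0 ≤ j ≤ M_p}. -/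
def bSubCMax (r p : ℤ) : ℤ :=
  if p ≤ r then p
  else if p ≤ 3 * r then r + (p - r) / 2
  else if p ≤ 5 * r then r + (5 * r - p) / 2
  else 6 * r - p

def BSubCBounds (r p j : ℤ) : Prop :=
  0 ≤ j ∧ j ≤ p ∧ p + j ≤ 6 * r ∧ 2 * j ≤ p + r ∧ p + 2 * j ≤ 7 * r

theorem bSubCBounds_iff {r p j : ℤ} : BSubCBounds r p j ↔ 0 ≤ j ∧ j ≤ bSubCMax r p := by
  unfold BSubCBounds bSubCMax
  split_ifs <;> omega

theorem bSubCBounds_of_mem_Sset {r p : ℤ} {q : ℤ × ℤ × ℤ × ℤ} (hq : q ∈ Sset r p) :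
    BSubCBounds r p (q.2.1 - q.2.2.1) := by
  obtain ⟨a, b, c, d⟩ := q
  obtain ⟨har, hba, hcb, hrc, hpos, hneg, hsum⟩ := hq
  unfold BSubCBounds
  omega

theorem exists_mem_Sset_of_le {r p j : ℤ} (hj : 0 ≤ j) (hjr : j ≤ r) (hjp : j ≤ p)
    (hpj : p + j ≤ 6 * r) : ∃ q ∈ Sset r p, q.2.1 - q.2.2.1 = j := by
  set ε := (p + j) % 2
  refine ⟨(ε, 0, -j, (j - p - ε) / 2), ?_, by simp⟩
  refine ⟨?_, ?_, ?_, ?_, ?_, ?_, ?_⟩ <;> simp only <;> omega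

theorem exists_mem_Sset_of_lt {r p j : ℤ} (hrj : r < j) (hjp : 2 * j ≤ p + r)
    (hpj : p + 2 * j ≤ 7 * r) : ∃ q ∈ Sset r p, q.2.1 - q.2.2.1 = j := by
  set ε := (p + r) % 2
  refine ⟨(j - r + ε, j - r, -r, (3 * r - 2 * j - ε - p) / 2), ?_, by simp⟩
  refine ⟨?_, ?_, ?_, ?_, ?_, ?_, ?_⟩ <;> simp only <;> omega

theorem exists_mem_Sset_of_bSubCBounds {r p j : ℤ} (h : BSubCBounds r p j) :
    ∃ q ∈ Sset r p, q.2.1 - q.2.2.1 = j := by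
  obtain ⟨hj, hjp, hpj, hjp', hpj'⟩ := h
  rcases le_or_gt j r with hjr | hrj
  · exact exists_mem_Sset_of_le hj hjr hjp hpj
  · exact exists_mem_Sset_of_lt hrj hjp' hpj'

theorem Sset_values_b_sub_c_general (r p : ℤ) :
    {j : ℤ | ∃ q ∈ Sset r p, q.2.1 - q.2.2.1 = j} =
      {j : ℤ | 0 ≤ j ∧ j ≤ (if p ≤ r then p
        else if p ≤ 3 * r then r + (p - r) / 2
        else if p ≤ 5 * r then r + (5 * r - p) / 2
        else 6 * r - p)} := by
  ext j
  constructor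
  · rintro ⟨q, hq, rfl⟩
    exact bSubCBounds_iff.1 (bSubCBounds_of_mem_Sset hq)
  · intro hj
    exact exists_mem_Sset_of_bSubCBounds (bSubCBounds_iff.2 hj)

/-- the set of values of `b − c` on `S_p(r)` is exactly `{0, 1, …, M_p}`,
where `M_p = p` if `p ≤ r`, `M_p = r + ⌊(p−r)/2⌋` if `r < p ≤ 3r`,
`M_p = r + ⌊(5r−p)/2⌋` if `3r < p ≤ 5r`, and `M_p = 6r − p` if `p > 5r`. -/
theorem Sset_values_b_sub_c (r p : ℤ) (hr : 1 ≤ r) (hp0 : 0 ≤ p) (hp : p ≤ 6 * r) :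
    {j : ℤ | ∃ q ∈ Sset r p, q.2.1 - q.2.2.1 = j} =
      {j : ℤ | 0 ≤ j ∧ j ≤ (if p ≤ r then p
        else if p ≤ 3 * r then r + (p - r) / 2
        else if p ≤ 5 * r then r + (5 * r - p) / 2
        else 6 * r - p)} :=
  Sset_values_b_sub_c_general r p
end
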